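/- Every solution y on (0, ∞) of the ODE 8 r² y' y'' + 8 r (y')² = 1 with r y'(r) > 0 is of the form y(r) = √(r + a) − √a · arcoth(√(1 + r/a)) + C for some constants a ≥ 0 and C ∈ ℝ (with the convention that for a = 0 the formula reads y = √r + C). -/

import Mathlib

/-- Inverse hyperbolic cotangent, `arcoth x = (1/2) log((x+1)/(x−1))`. -/
noncomputable def arcoth (x : ℝ) : ℝ := (1 / 2) * Real.log ((x + 1) / (x - 1))

lemma const_of_deriv_zero {f : ℝ → ℝ} (h : ∀ r ∈ Set.Ioi (0:ℝ), HasDerivAt f 0 r) :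
    ∀ r ∈ Set.Ioi (0:ℝ), f r = f 1 := by
  intro r hr
  refine (convex_Ioi (0:ℝ)).is_const_of_fderivWithin_eq_zero
    (fun x hx => (h x hx).differentiableAt.differentiableWithinAt) (fun x hx => ?_) hr
    (by norm_num)
  rw [fderivWithin_of_isOpen isOpen_Ioi hx, (h x hx).hasFDerivAt.fderiv]
  ext; simp

lemma hasDerivAt_arcoth {x : ℝ} (hx : 1 < x) :
    HasDerivAt arcoth ((1/2)*(1/(x+1) - 1/(x-1))) x := by
  have h1 : HasDerivAt (fun t : ℝ => (1/2)*(Real.log (t+1) - Real.log (t-1)))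
      ((1/2)*(1/(x+1) - 1/(x-1))) x := by
    have ha : HasDerivAt (fun t : ℝ => Real.log (t+1)) (1/(x+1)) x := by
      simpa [Function.comp_def] using (Real.hasDerivAt_log (by simp only [id_eq]; intro h; linarith)).comp x
        ((hasDerivAt_id x).add_const 1)
    have hb : HasDerivAt (fun t : ℝ => Real.log (t-1)) (1/(x-1)) x := by
      simpa [Function.comp_def] using (Real.hasDerivAt_log (by simp only [id_eq]; intro h; linarith)).comp x
        ((hasDerivAt_id x).sub_const 1)
    simpa using (ha.sub hb).const_mul (1/2 : ℝ)
  refine h1.congr_of_eventuallyEq ?_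
  filter_upwards [eventually_gt_nhds hx] with t ht
  unfold arcoth
  rw [Real.log_div (by linarith) (by linarith)]

/-- Every solution `y` on `(0,∞)` of `8 r² y' y'' + 8 r (y')² = 1` with
`r y'(r) > 0` has the form `y(r) = √(r+a) − √a·arcoth(√(1+r/a)) + C`
for some constants `a ≥ 0`, `C ∈ ℝ` (reading `y = √r + C` when `a = 0`). -/
theorem mongeAmpere_ODE_general_solution (y : ℝ → ℝ)
    (hd : ∀ r ∈ Set.Ioi (0 : ℝ), DifferentiableAt ℝ y r ∧ DifferentiableAt ℝ (deriv y) r)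
    (hode : ∀ r ∈ Set.Ioi (0 : ℝ),
      8 * r ^ 2 * deriv y r * deriv (deriv y) r + 8 * r * (deriv y r) ^ 2 = 1)
    (hpos : ∀ r ∈ Set.Ioi (0 : ℝ), 0 < r * deriv y r) :
    ∃ a C : ℝ, 0 ≤ a ∧ ∀ r ∈ Set.Ioi (0 : ℝ),
      y r = if a = 0 then Real.sqrt r + C
            else Real.sqrt (r + a) - Real.sqrt a * arcoth (Real.sqrt (1 + r / a)) + C := by
  set g : ℝ → ℝ := fun r => 4 * (r * deriv y r) ^ 2 - r with hg
  have hgd : ∀ r ∈ Set.Ioi (0:ℝ), HasDerivAt g 0 r := by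
    intro r hr
    have hY : HasDerivAt (fun x => x * deriv y x)
        (1 * deriv y r + r * deriv (deriv y) r) r :=
      (hasDerivAt_id r).mul ((hd r hr).2.hasDerivAt)
    have h2 : HasDerivAt g
        (4 * (2 * (r * deriv y r) ^ 1 * (1 * deriv y r + r * deriv (deriv y) r)) - 1) r :=
      ((hY.pow 2).const_mul 4).sub (hasDerivAt_id r)
    convert h2 using 1
    have h3 := hode r hr
    nlinarith [h3]
  obtain ⟨a, hconst⟩ : ∃ a : ℝ, ∀ r ∈ Set.Ioi (0:ℝ), 4 * (r * deriv y r) ^ 2 = r + a := by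
    refine ⟨g 1, fun r hr => ?_⟩
    have h2 := const_of_deriv_zero hgd r hr
    simp only [hg] at h2 ⊢
    linarith
  have ha0 : 0 ≤ a := by
    by_contra h
    push_neg at h
    have hr : (-a/2 : ℝ) ∈ Set.Ioi (0:ℝ) := by simp only [Set.mem_Ioi]; linarith
    have h2 := hconst _ hr
    nlinarith [sq_nonneg (-a / 2 * deriv y (-a / 2))]
  have hderiv : ∀ r ∈ Set.Ioi (0:ℝ), deriv y r = Real.sqrt (r + a) / (2 * r) := by
    intro r hr
    have hrpos : (0:ℝ) < r := hr
    have hY : 0 < r * deriv y r := hpos r hr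
    have hsq : Real.sqrt (r + a) = 2 * (r * deriv y r) := by
      rw [show r + a = (2 * (r * deriv y r)) ^ 2 by nlinarith [hconst r hr]]
      exact Real.sqrt_sq (by linarith)
    rw [hsq]; field_simp
  rcases eq_or_lt_of_le ha0 with ha0' | hapos
  · -- a = 0
    refine ⟨a, y 1 - Real.sqrt 1, ha0, ?_⟩
    intro r hr
    rw [if_pos ha0'.symm]
    have key : ∀ s ∈ Set.Ioi (0:ℝ), HasDerivAt (fun t => y t - Real.sqrt t) 0 s := by
      intro s hs
      have hspos : (0:ℝ) < s := hs
      have h1 : HasDerivAt y (deriv y s) s := (hd s hs).1.hasDerivAt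
      have h2 : HasDerivAt Real.sqrt (1 / (2 * Real.sqrt s)) s :=
        Real.hasDerivAt_sqrt (ne_of_gt hspos)
      have h3 := h1.sub h2
      convert h3 using 1
      · rfl
      · rfl
      · rfl
      rw [hderiv s hs, ← ha0', add_zero]
      have hsq : Real.sqrt s * Real.sqrt s = s := Real.mul_self_sqrt hspos.le
      have hsp : Real.sqrt s > 0 := Real.sqrt_pos.mpr hspos
      field_simp
      nlinarith
    have h4 := const_of_deriv_zero key r hr
    change y r - Real.sqrt r = y 1 - Real.sqrt 1 at h4
    linarith
  · -- a > 0
    set F : ℝ → ℝ := fun r => Real.sqrt (r + a) - Real.sqrt a * arcoth (Real.sqrt (1 + r / a))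
      with hF
    have hb : (0:ℝ) < Real.sqrt a := Real.sqrt_pos.mpr hapos
    have hbsq : Real.sqrt a ^ 2 = a := Real.sq_sqrt hapos.le
    have hFd : ∀ s ∈ Set.Ioi (0:ℝ), HasDerivAt F (Real.sqrt (s + a) / (2 * s)) s := by
      intro s hs
      have hspos : (0:ℝ) < s := hs
      set t := Real.sqrt (s + a) with ht
      set σ := Real.sqrt (1 + s / a) with hσ
      have htpos : 0 < t := Real.sqrt_pos.mpr (by linarith)
      have htsq : t ^ 2 = s + a := Real.sq_sqrt (by linarith)
      have hσ1 : 1 < σ := by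
        rw [hσ]
        rw [show (1:ℝ) < Real.sqrt (1 + s/a) ↔ (1:ℝ)^2 < 1 + s/a from
          Real.lt_sqrt (by positivity)]
        have := div_pos hspos hapos
        nlinarith
      have hσsq : σ ^ 2 = 1 + s / a := Real.sq_sqrt (by positivity)
      have h1 : HasDerivAt (fun x => Real.sqrt (x + a)) (1 / (2 * t) * 1) s :=
        (Real.hasDerivAt_sqrt (by (try simp only [id_eq]); intro h; nlinarith)).comp s
          ((hasDerivAt_id s).add_const a)
      have hσd : HasDerivAt (fun x => Real.sqrt (1 + x / a)) (1 / (2 * σ) * (1/a)) s := by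
        have inner : HasDerivAt (fun x : ℝ => 1 + x / a) (1/a) s := by
          simpa using ((hasDerivAt_id s).div_const a).const_add 1
        have hne : 1 + s / a ≠ 0 := by positivity
        exact (Real.hasDerivAt_sqrt (by (try simp only [id_eq]); exact hne)).comp s inner
      have h2 : HasDerivAt (fun x => Real.sqrt a * arcoth (Real.sqrt (1 + x / a)))
          (Real.sqrt a * ((1/2)*(1/(σ+1) - 1/(σ-1)) * (1 / (2 * σ) * (1/a)))) s :=
        (by
          have hA : HasDerivAt arcoth ((1/2)*(1/(σ+1) - 1/(σ-1))) (Real.sqrt (1 + s / a)) :=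
            hasDerivAt_arcoth hσ1
          exact (hA.comp s hσd).const_mul (Real.sqrt a))
      have h3 := h1.sub h2
      convert h3 using 1
      · rfl
      · rfl
      · rfl
      have htbσ : t = Real.sqrt a * σ := by
        rw [ht, hσ, ← Real.sqrt_mul hapos.le]
        congr 1
        field_simp
        ring
      have hσ0 : (0:ℝ) < σ := by linarith
      have hs_eq : s = a * σ ^ 2 - a := by
        have := hσsq
        field_simp at this
        linarith
      have hσm : σ - 1 ≠ 0 := by intro h; nlinarith
      have hσp : σ + 1 ≠ 0 := by intro h; nlinarith
      have hbne : Real.sqrt a ≠ 0 := ne_of_gt hb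
      have hσne : σ ≠ 0 := ne_of_gt hσ0
      have h5 : a * σ ^ 2 - a ≠ 0 := by intro h; nlinarith
      rw [htbσ, hs_eq]
      field_simp
      have h6 : -1 + σ ^ 2 ≠ 0 := by intro h; apply hσm; nlinarith
      rw [hbsq]; linear_combination (2*a*σ^2) * mul_inv_cancel₀ h6
    refine ⟨a, y 1 - F 1, ha0, ?_⟩
    intro r hr
    rw [if_neg (ne_of_gt hapos)]
    have key : ∀ s ∈ Set.Ioi (0:ℝ), HasDerivAt (fun t => y t - F t) 0 s := by
      intro s hs
      have h1 : HasDerivAt y (deriv y s) s := (hd s hs).1.hasDerivAt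
      have h3 := h1.sub (hFd s hs)
      convert h3 using 1
      · rfl
      · rfl
      · rfl
      rw [hderiv s hs]; ring
    have h4 := const_of_deriv_zero key r hr
    change y r - F r = y 1 - F 1 at h4
    have : F r = Real.sqrt (r + a) - Real.sqrt a * arcoth (Real.sqrt (1 + r / a)) := rfl
    rw [this] at h4
    linarith
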